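/- Let A_* be a finitely generated free based chain complex over a ring R such that A_j = 0 for j ≤ l−2 and H_{l−1}(A_*) = 0. Then there exists a chain complex B_*, chain homotopy equivalent to A_*, with B_j ≅ A_j for j ≥ l+2 and j = l, B_{l+1} = A_{l+1} ⊕ A_{l−1}, and B_j = 0 for j ≤ l−1. -/

import Mathlib

/-!
Since `A_{l-2} = 0` and `H_{l-1}(A) = 0`, the differential `d : A_l → A_{l-1}` is onto the free,
hence projective, module `A_{l-1}`, so it has a section `s`. Kill `A_{l-1}` and add it to degree
`l + 1` instead: `B_{l+1} = A_{l+1} ⊕ A_{l-1}`, with differentials `(d, 0) : A_{l+2} → B_{l+1}`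
and `(d s) : B_{l+1} → A_l`. The inclusion `f : A → B` and the map `g : B → A` which is the
projection except that `g_l = 1 - d s` are chain maps, and the homotopies are `-s : A_{l-1} → A_l`
for `g f ≃ 1` and `(0, -d) : B_l → B_{l+1}` for `f g ≃ 1`. Everything except the existence of `s`
works in any preadditive category with binary biproducts and a zero object.
-/

open CategoryTheory Limits ZeroObject

universe v u w

noncomputable section

section

variable {C : Type u} [Category.{v} C]

lemma HomologicalComplex.d_eq_zero_of_comp_d_eq_id [Preadditive C] {ι : Type w}
    {c : ComplexShape ι} {A : HomologicalComplex C c} {i j : ι} (k : ι) (s : A.X j ⟶ A.X i)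
    (hs : s ≫ A.d i j = 𝟙 _) : A.d j k = 0 := by
  rw [← Category.id_comp (A.d j k), ← hs, Category.assoc, A.d_comp_d, comp_zero]

lemma HomologicalComplex.epi_d_of_exactAt [Preadditive C] {ι : Type w} {c : ComplexShape ι}
    {K : HomologicalComplex C c} {i j k : ι} (hij : c.Rel i j) (hjk : c.Rel j k)
    (hK : K.ExactAt j) (hk : IsZero (K.X k)) : Epi (K.d i j) :=
  ((K.exactAt_iff' i j k (c.prev_eq' hij) (c.next_eq' hjk)).1 hK).epi_f (hk.eq_of_tgt _ _)

variable [HasZeroMorphisms C] {ι : Type w} [DecidableEq ι] {X Y : ι → C}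

def homAt {a b : ι} (φ : X a ⟶ Y b) (i j : ι) : X i ⟶ Y j :=
  if h : i = a ∧ j = b then eqToHom (by rw [h.1]) ≫ φ ≫ eqToHom (by rw [h.2]) else 0

lemma homAt_self {a b : ι} (φ : X a ⟶ Y b) : homAt φ a b = φ := by
  simp [homAt]

lemma homAt_of_ne {a b : ι} (φ : X a ⟶ Y b) {i j : ι} (h : ¬(i = a ∧ j = b)) :
    homAt φ i j = 0 :=
  dif_neg h

end

namespace ChainComplex

variable {C : Type u} [Category.{v} C] [Preadditive C] [HasZeroObject C] [HasBinaryBiproducts C]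
  (A : ChainComplex C ℤ) (l : ℤ)

namespace SplitOff

def X (j : ℤ) : C :=
  if j = l + 1 then A.X (l + 1) ⊞ A.X (l - 1) else if j = l - 1 then 0 else A.X j

lemma X_succ : X A l (l + 1) = (A.X (l + 1) ⊞ A.X (l - 1)) := if_pos rfl

lemma X_eq {j : ℤ} (h₁ : j ≠ l + 1) (h' : j ≠ l - 1) : X A l j = A.X j := by
  rw [X, if_neg h₁, if_neg h']

lemma isZero_X_pred : IsZero (X A l (l - 1)) := by
  rw [X, if_neg (by omega), if_pos rfl]
  exact isZero_zero C

variable (s : A.X (l - 1) ⟶ A.X l)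

def d (i j : ℤ) : X A l i ⟶ X A l j :=
  if hij : j + 1 = i then
    if h₂ : i = l + 2 then
      eqToHom (by rw [h₂, X_eq A l (by omega) (by omega)]) ≫ A.d (l + 2) (l + 1) ≫
        biprod.inl ≫ eqToHom (by rw [show j = l + 1 by omega, X_succ])
    else if h₁ : i = l + 1 then
      eqToHom (by rw [h₁, X_succ]) ≫ biprod.desc (A.d (l + 1) l) s ≫
        eqToHom (by rw [show j = l by omega, X_eq A l (by omega) (by omega)])
    else if h₀ : i = l ∨ i = l - 1 then 0
    else eqToHom (X_eq A l (by omega) (by omega)) ≫ A.d i j ≫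
      eqToHom (X_eq A l (by omega) (by omega)).symm
  else 0

lemma d_add_two : d A l s (l + 2) (l + 1) =
    eqToHom (X_eq A l (by omega) (by omega)) ≫ A.d (l + 2) (l + 1) ≫ biprod.inl ≫
      eqToHom (X_succ A l).symm := by
  rw [d, dif_pos (by omega), dif_pos rfl]

lemma d_add_one : d A l s (l + 1) l =
    eqToHom (X_succ A l) ≫ biprod.desc (A.d (l + 1) l) s ≫
      eqToHom (X_eq A l (by omega) (by omega)).symm := by
  rw [d, dif_pos rfl, dif_neg (by omega), dif_pos rfl]

lemma d_of_ne {i j : ℤ} (hij : j + 1 = i) (h₂ : i ≠ l + 2) (h₁ : i ≠ l + 1) (h₀ : i ≠ l)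
    (h' : i ≠ l - 1) :
    d A l s i j = eqToHom (X_eq A l (by omega) (by omega)) ≫ A.d i j ≫
      eqToHom (X_eq A l (by omega) (by omega)).symm := by
  rw [d, dif_pos hij, dif_neg h₂, dif_neg h₁, dif_neg (by omega)]

def toX (j : ℤ) : A.X j ⟶ X A l j :=
  if h₁ : j = l + 1 then eqToHom (by rw [h₁]) ≫ biprod.inl ≫ eqToHom (by rw [h₁, X_succ])
  else if h' : j = l - 1 then 0
  else eqToHom (X_eq A l h₁ h').symm

lemma toX_succ : toX A l (l + 1) = biprod.inl ≫ eqToHom (X_succ A l).symm := by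
  simp [toX]

lemma toX_of_ne {j : ℤ} (h₁ : j ≠ l + 1) (h' : j ≠ l - 1) :
    toX A l j = eqToHom (X_eq A l h₁ h').symm := by
  rw [toX, dif_neg h₁, dif_neg h']

def fromX (j : ℤ) : X A l j ⟶ A.X j :=
  if h₁ : j = l + 1 then eqToHom (by rw [h₁, X_succ]) ≫ biprod.fst ≫ eqToHom (by rw [h₁])
  else if h₀ : j = l then
    eqToHom (by rw [h₀, X_eq A l (by omega) (by omega)]) ≫ (𝟙 _ - A.d l (l - 1) ≫ s) ≫
      eqToHom (by rw [h₀])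
  else if h' : j = l - 1 then 0
  else eqToHom (X_eq A l h₁ h')

lemma fromX_succ : fromX A l s (l + 1) = eqToHom (X_succ A l) ≫ biprod.fst := by
  simp [fromX]

lemma fromX_self : fromX A l s l =
    eqToHom (X_eq A l (by omega) (by omega)) ≫ (𝟙 _ - A.d l (l - 1) ≫ s) := by
  rw [fromX, dif_neg (by omega), dif_pos rfl, eqToHom_refl, Category.comp_id]

lemma fromX_of_ne {j : ℤ} (h₁ : j ≠ l + 1) (h₀ : j ≠ l) (h' : j ≠ l - 1) :
    fromX A l s j = eqToHom (X_eq A l h₁ h') := by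
  rw [fromX, dif_neg h₁, dif_neg h₀, dif_neg h']

end SplitOff

open SplitOff

variable (s : A.X (l - 1) ⟶ A.X l)

abbrev splitOff : ChainComplex C ℤ where
  X := X A l
  d := d A l s
  shape i j hij := by rw [d, dif_neg (by simpa using hij)]
  d_comp_d' i j k hij hjk := by
    simp only [ComplexShape.down_Rel] at hij hjk
    by_cases hgen : i ≠ l + 3 ∧ i ≠ l + 2 ∧ i ≠ l + 1 ∧ i ≠ l ∧ i ≠ l - 1
    · rw [d_of_ne A l s hij (by omega) (by omega) (by omega) (by omega),
        d_of_ne A l s hjk (by omega) (by omega) (by omega) (by omega)]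
      simp
    obtain rfl | rfl | rfl | rfl | rfl :
        i = l + 3 ∨ i = l + 2 ∨ i = l + 1 ∨ l = i ∨ i = l - 1 := by omega
    · obtain rfl : j = l + 2 := by omega
      obtain rfl : k = l + 1 := by omega
      rw [d_of_ne A l s hij (by omega) (by omega) (by omega) (by omega), d_add_two]
      simp
    · obtain rfl : j = l + 1 := by omega
      obtain rfl : l = k := by omega
      rw [d_add_two, d_add_one]
      simp
    · obtain rfl : k = l - 1 := by omega
      exact (isZero_X_pred A l).eq_of_tgt _ _
    · obtain rfl : j = l - 1 := by omega
      rw [(isZero_X_pred A l).eq_zero_of_src (d A l s _ k), comp_zero]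
    · exact (isZero_X_pred A l).eq_of_src _ _

def splitOffXIso {j : ℤ} (h₁ : j ≠ l + 1) (h' : j ≠ l - 1) : (splitOff A l s).X j ≅ A.X j :=
  eqToIso (X_eq A l h₁ h')

def splitOffXSuccIso : (splitOff A l s).X (l + 1) ≅ A.X (l + 1) ⊞ A.X (l - 1) :=
  eqToIso (X_succ A l)

lemma isZero_splitOff_X {j : ℤ} (hA : ∀ i ≤ l - 2, IsZero (A.X i)) (hj : j ≤ l - 1) :
    IsZero ((splitOff A l s).X j) := by
  obtain rfl | hj := eq_or_lt_of_le hj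
  · exact isZero_X_pred A l
  · exact (hA j (by omega)).of_iso (splitOffXIso A l s (by omega) (by omega))

variable {A l s} (hs : s ≫ A.d l (l - 1) = 𝟙 _)
include hs

def toSplitOff : A ⟶ splitOff A l s where
  f := toX A l
  comm' i j hij := by
    simp only [ComplexShape.down_Rel] at hij
    change toX A l i ≫ d A l s i j = A.d i j ≫ toX A l j
    by_cases hgen : i ≠ l + 2 ∧ i ≠ l + 1 ∧ i ≠ l ∧ i ≠ l - 1
    · rw [d_of_ne A l s hij (by omega) (by omega) (by omega) (by omega),
        toX_of_ne A l (by omega) (by omega), toX_of_ne A l (by omega) (by omega)]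
      simp
    obtain rfl | rfl | rfl | rfl : i = l + 2 ∨ i = l + 1 ∨ l = i ∨ i = l - 1 := by omega
    · obtain rfl : j = l + 1 := by omega
      rw [d_add_two, toX_succ, toX_of_ne A l (by omega) (by omega)]
      simp
    · obtain rfl : l = j := by omega
      rw [d_add_one, toX_succ, toX_of_ne A l (by omega) (by omega)]
      simp
    · obtain rfl : j = l - 1 := by omega
      exact (isZero_X_pred A l).eq_of_tgt _ _
    · rw [HomologicalComplex.d_eq_zero_of_comp_d_eq_id j s hs,
        (isZero_X_pred A l).eq_zero_of_src (d A l s _ j), comp_zero, zero_comp]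

def fromSplitOff : splitOff A l s ⟶ A where
  f := fromX A l s
  comm' i j hij := by
    simp only [ComplexShape.down_Rel] at hij
    change fromX A l s i ≫ A.d i j = d A l s i j ≫ fromX A l s j
    by_cases hgen : i ≠ l + 2 ∧ i ≠ l + 1 ∧ i ≠ l ∧ i ≠ l - 1
    · rw [d_of_ne A l s hij (by omega) (by omega) (by omega) (by omega),
        fromX_of_ne A l s (by omega) (by omega) (by omega),
        fromX_of_ne A l s (by omega) (by omega) (by omega)]
      simp
    obtain rfl | rfl | rfl | rfl : i = l + 2 ∨ i = l + 1 ∨ l = i ∨ i = l - 1 := by omega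
    · obtain rfl : j = l + 1 := by omega
      rw [d_add_two, fromX_succ, fromX_of_ne A l s (by omega) (by omega) (by omega)]
      simp
    · obtain rfl : l = j := by omega
      have key : biprod.desc (A.d (l + 1) l) s ≫ (𝟙 _ - A.d l (l - 1) ≫ s) =
          biprod.fst ≫ A.d (l + 1) l := by
        ext <;> simp [reassoc_of% hs]
      rw [d_add_one, fromX_succ, fromX_self]
      simp only [Category.assoc, eqToHom_trans_assoc, eqToHom_refl, Category.id_comp, key]
    · obtain rfl : j = l - 1 := by omega
      rw [fromX_self, (isZero_X_pred A l).eq_zero_of_tgt (d A l s _ _)]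
      simp [hs]
    · exact (isZero_X_pred A l).eq_of_src _ _

def splitOffHomotopyHomInvId : Homotopy (toSplitOff hs ≫ fromSplitOff hs) (𝟙 A) where
  hom := homAt (X := A.X) (Y := A.X) (-s)
  zero i j hij := homAt_of_ne _ (by simp at hij; omega)
  comm i := by
    change toX A l i ≫ fromX A l s i = _
    by_cases hgen : i ≠ l + 1 ∧ i ≠ l ∧ i ≠ l - 1
    · rw [dNext_eq _ (show (ComplexShape.down ℤ).Rel i (i - 1) by simp),
        prevD_eq _ (show (ComplexShape.down ℤ).Rel (i + 1) i by simp),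
        toX_of_ne A l (by omega) (by omega), fromX_of_ne A l s (by omega) (by omega) (by omega),
        homAt_of_ne _ (by omega), homAt_of_ne _ (by omega)]
      simp
    obtain rfl | rfl | rfl : i = l + 1 ∨ l = i ∨ i = l - 1 := by omega
    · rw [dNext_eq _ (show (ComplexShape.down ℤ).Rel (l + 1) l by simp),
        prevD_eq _ (show (ComplexShape.down ℤ).Rel (l + 2) (l + 1) by simp; omega),
        toX_succ, fromX_succ, homAt_of_ne _ (by omega), homAt_of_ne _ (by omega)]
      simp
    · rw [dNext_eq _ (show (ComplexShape.down ℤ).Rel l (l - 1) by simp),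
        prevD_eq _ (show (ComplexShape.down ℤ).Rel (l + 1) l by simp),
        toX_of_ne A l (by omega) (by omega), fromX_self, homAt_self,
        homAt_of_ne (i := l) _ (by omega)]
      simp [sub_eq_neg_add]
    · rw [dNext_eq _ (show (ComplexShape.down ℤ).Rel (l - 1) (l - 2) by simp; omega),
        prevD_eq _ (show (ComplexShape.down ℤ).Rel l (l - 1) by simp),
        (isZero_X_pred A l).eq_zero_of_tgt (toX A l _), homAt_self,
        homAt_of_ne (i := l - 2) _ (by omega)]
      simp [hs]

def splitOffHomotopyInvHomId :
    Homotopy (fromSplitOff hs ≫ toSplitOff hs) (𝟙 (splitOff A l s)) where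
  hom := homAt (X := X A l) (Y := X A l) (eqToHom (X_eq A l (by omega) (by omega)) ≫
    (-(A.d l (l - 1) ≫ biprod.inr)) ≫ eqToHom (X_succ A l).symm)
  zero i j hij := homAt_of_ne _ (by simp at hij; omega)
  comm i := by
    change fromX A l s i ≫ toX A l i = _
    by_cases hgen : i ≠ l + 1 ∧ i ≠ l ∧ i ≠ l - 1
    · rw [dNext_eq _ (show (ComplexShape.down ℤ).Rel i (i - 1) by simp),
        prevD_eq _ (show (ComplexShape.down ℤ).Rel (i + 1) i by simp),
        toX_of_ne A l (by omega) (by omega), fromX_of_ne A l s (by omega) (by omega) (by omega),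
        homAt_of_ne _ (by omega), homAt_of_ne _ (by omega)]
      simp
    obtain rfl | rfl | rfl : i = l + 1 ∨ l = i ∨ i = l - 1 := by omega
    · have key : biprod.fst ≫ biprod.inl =
          biprod.desc (A.d (l + 1) l) s ≫ (-(A.d l (l - 1) ≫ biprod.inr)) + 𝟙 _ := by
        ext <;> simp [reassoc_of% hs]
      rw [dNext_eq _ (show (ComplexShape.down ℤ).Rel (l + 1) l by simp),
        prevD_eq _ (show (ComplexShape.down ℤ).Rel (l + 2) (l + 1) by simp; omega),
        toX_succ, fromX_succ, homAt_self, homAt_of_ne (i := l + 1) _ (by omega)]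
      simp only [d_add_one, Category.assoc, eqToHom_trans_assoc, eqToHom_refl,
        Category.id_comp, reassoc_of% key]
      simp
    · rw [dNext_eq _ (show (ComplexShape.down ℤ).Rel l (l - 1) by simp),
        prevD_eq _ (show (ComplexShape.down ℤ).Rel (l + 1) l by simp),
        toX_of_ne A l (by omega) (by omega), fromX_self, homAt_self,
        homAt_of_ne (i := l - 1) _ (by omega)]
      simp [d_add_one, sub_eq_neg_add]
    · exact (isZero_X_pred A l).eq_of_tgt _ _

def splitOffHomotopyEquiv : HomotopyEquiv A (splitOff A l s) where
  hom := toSplitOff hs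
  inv := fromSplitOff hs
  homotopyHomInvId := splitOffHomotopyHomInvId hs
  homotopyInvHomId := splitOffHomotopyInvHomId hs

end ChainComplex

lemma ChainComplex.free_finite_splitOff_X {R : Type u} [Ring R]
    (A : ChainComplex (ModuleCat.{v} R) ℤ) (l : ℤ) (s : A.X (l - 1) ⟶ A.X l)
    (hfree : ∀ j, Module.Free R (A.X j)) (hfg : ∀ j, Module.Finite R (A.X j)) (j : ℤ) :
    Module.Free R ((splitOff A l s).X j) ∧ Module.Finite R ((splitOff A l s).X j) := by
  by_cases h₁ : j = l + 1
  · subst h₁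
    have := hfree (l + 1); have := hfree (l - 1); have := hfg (l + 1); have := hfg (l - 1)
    let e := (splitOffXSuccIso A l s ≪≫ ModuleCat.biprodIsoProd _ _).toLinearEquiv
    exact ⟨.of_equiv e.symm, .equiv e.symm⟩
  by_cases h' : j = l - 1
  · subst h'
    have := ModuleCat.subsingleton_of_isZero (SplitOff.isZero_X_pred A l)
    exact ⟨inferInstance, inferInstance⟩
  · have := hfree j; have := hfg j
    let e := (splitOffXIso A l s h₁ h').toLinearEquiv
    exact ⟨.of_equiv e.symm, .equiv e.symm⟩

/-- Splitting-off lemma: if `A_*` is a finitely generated free (based) chain complex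
over a ring `R` with `A_j = 0` for `j ≤ l - 2` and `H_{l-1}(A_*) = 0`, then there is a
chain complex `B_*`, chain homotopy equivalent to `A_*`, with `B_j ≅ A_j` for
`j ≥ l + 2` and `j = l`, `B_{l+1} ≅ A_{l+1} ⊕ A_{l-1}`, and `B_j = 0` for `j ≤ l - 1`. -/
theorem splitting_off (R : Type) [Ring R] (l : ℤ)
    (A : ChainComplex (ModuleCat R) ℤ)
    (hfree : ∀ j, Module.Free R (A.X j)) (hfg : ∀ j, Module.Finite R (A.X j))
    (hvanish : ∀ j ≤ l - 2, Subsingleton (A.X j))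
    (hH : Limits.IsZero (A.homology (l - 1))) :
    ∃ B : ChainComplex (ModuleCat R) ℤ,
      (∀ j, Module.Free R (B.X j)) ∧ (∀ j, Module.Finite R (B.X j)) ∧
      Nonempty (HomotopyEquiv A B) ∧
      (∀ j, l + 2 ≤ j → Nonempty ((B.X j) ≃ₗ[R] (A.X j))) ∧
      Nonempty ((B.X l) ≃ₗ[R] (A.X l)) ∧
      Nonempty ((B.X (l + 1)) ≃ₗ[R] ((A.X (l + 1)) × (A.X (l - 1)))) ∧
      (∀ j ≤ l - 1, Subsingleton (B.X j)) := by
  have hA (j : ℤ) (hj : j ≤ l - 2) : IsZero (A.X j) :=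
    ModuleCat.isZero_iff_subsingleton.mpr (hvanish j hj)
  have : Epi (A.d l (l - 1)) := HomologicalComplex.epi_d_of_exactAt (by simp) (by simp; omega)
    ((A.exactAt_iff_isZero_homology _).2 hH) (hA (l - 2) le_rfl)
  have : Module.Free R (A.X (l - 1)) := hfree (l - 1)
  obtain ⟨s, hs⟩ : ∃ s, s ≫ A.d l (l - 1) = 𝟙 _ := ⟨_, Projective.factorThru_comp (𝟙 _) _⟩
  open ChainComplex in
  exact ⟨splitOff A l s, fun j => (free_finite_splitOff_X A l s hfree hfg j).1,
    fun j => (free_finite_splitOff_X A l s hfree hfg j).2, ⟨splitOffHomotopyEquiv hs⟩,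
    fun j hj => ⟨(splitOffXIso A l s (by omega) (by omega)).toLinearEquiv⟩,
    ⟨(splitOffXIso A l s (by omega) (by omega)).toLinearEquiv⟩,
    ⟨(splitOffXSuccIso A l s ≪≫ ModuleCat.biprodIsoProd _ _).toLinearEquiv⟩,
    fun j hj => ModuleCat.subsingleton_of_isZero (isZero_splitOff_X A l s hA hj)⟩
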